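/- Let G consist of an n-cycle v_1,...,v_n plus two vertices v, w each adjacent to all v_i. Suppose an edge coloring c assigns the same color to v_i v and v_j v, and the same color to v_i w and v_j w, for two cycle vertices v_i, v_j at cycle-distance greater than 3. Then G contains no rainbow geodesic between v_i and v_j, so c is not a strong rainbow coloring of G. -/
import Mathlib


namespace RC

variable {V : Type*}

/-- A walk is rainbow under edge coloring `c` if its edges receive pairwise distinct colors. -/
def IsRainbow {G : SimpleGraph V} (c : Sym2 V → ℕ) {u v : V} (p : G.Walk u v) : Prop :=
  (p.edges.map c).Nodup

/-- `c` is a rainbow coloring: every pair of vertices is joined by a rainbow path. -/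
def IsRainbowColoring (G : SimpleGraph V) (c : Sym2 V → ℕ) : Prop :=
  ∀ u v : V, ∃ p : G.Walk u v, p.IsPath ∧ IsRainbow c p

/-- `c` is a strong rainbow coloring: every pair of vertices is joined by a rainbow geodesic. -/
def IsStrongRainbowColoring (G : SimpleGraph V) (c : Sym2 V → ℕ) : Prop :=
  ∀ u v : V, ∃ p : G.Walk u v, p.IsPath ∧ p.length = G.dist u v ∧ IsRainbow c p

/-- `c` uses at most `k` colors (namely `0, …, k-1`) on the edges of `G`. -/
def UsesColors (G : SimpleGraph V) (c : Sym2 V → ℕ) (k : ℕ) : Prop :=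
  ∀ e ∈ G.edgeSet, c e < k

/-- The rainbow connection number `rc(G)`. -/
noncomputable def rc (G : SimpleGraph V) : ℕ :=
  sInf {k | ∃ c : Sym2 V → ℕ, UsesColors G c k ∧ IsRainbowColoring G c}

/-- The strong rainbow connection number `src(G)`. -/
noncomputable def src (G : SimpleGraph V) : ℕ :=
  sInf {k | ∃ c : Sym2 V → ℕ, UsesColors G c k ∧ IsStrongRainbowColoring G c}

/-- Vertices of `H_n`: cycle vertices plus `v` (`true`) and `w` (`false`). -/
abbrev HV (n : ℕ) := Fin n ⊕ Bool

def hRel (n : ℕ) : HV n → HV n → Prop := fun x y =>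
  match x, y with
  | Sum.inl i, Sum.inl j => (i.val + 1) % n = j.val
  | Sum.inl _, Sum.inr _ => True
  | _, _ => False

/-- The graph `H_n`: an `n`-cycle plus two vertices `v, w` each adjacent to all cycle
vertices (and not to each other). -/
def HG (n : ℕ) : SimpleGraph (HV n) := SimpleGraph.fromRel (hRel n)

lemma succ_adj {n : ℕ} (hn : 2 ≤ n) {a b : Fin n} (h : (a.val + 1) % n = b.val) :
    (SimpleGraph.cycleGraph n).Adj a b := by
  rw [SimpleGraph.cycleGraph_adj']
  right
  have h2 : (b - a).val = (n - a.val + b.val) % n := by rw [Fin.sub_def]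
  have ha := a.isLt
  rw [h2]
  rcases lt_or_ge (a.val + 1) n with hlt | hge
  · rw [Nat.mod_eq_of_lt hlt] at h
    have h3 : n - a.val + b.val = n + 1 := by omega
    rw [h3, Nat.add_mod_left, Nat.mod_eq_of_lt (by omega)]
  · have han : a.val + 1 = n := by omega
    have hb0 : b.val = 0 := by rw [← h, han, Nat.mod_self]
    have h3 : n - a.val + b.val = 1 := by omega
    rw [h3, Nat.mod_eq_of_lt (by omega)]

lemma hg_adj_inl {n : ℕ} (hn : 2 ≤ n) {a b : Fin n}
    (h : (HG n).Adj (Sum.inl a) (Sum.inl b)) : (SimpleGraph.cycleGraph n).Adj a b := by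
  rw [HG, SimpleGraph.fromRel_adj] at h
  rcases h.2 with h' | h'
  · exact succ_adj hn h'
  · exact (succ_adj hn h').symm

/-- In `H_n`, if a coloring gives `v_i v` and `v_j v` the same color and `v_i w` and
`v_j w` the same color, for cycle vertices `v_i, v_j` at cycle-distance more than `3`,
then there is no rainbow geodesic between `v_i` and `v_j`, so the coloring is not a
strong rainbow coloring. -/
theorem stmt_14 (n : ℕ) (i j : Fin n)
    (hfar : 3 < (SimpleGraph.cycleGraph n).dist i j) (c : Sym2 (HV n) → ℕ)
    (hv : c s(Sum.inl i, Sum.inr true) = c s(Sum.inl j, Sum.inr true))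
    (hw : c s(Sum.inl i, Sum.inr false) = c s(Sum.inl j, Sum.inr false)) :
    (¬ ∃ p : (HG n).Walk (Sum.inl i) (Sum.inl j), p.IsPath ∧
        p.length = (HG n).dist (Sum.inl i) (Sum.inl j) ∧ IsRainbow c p) ∧
      ¬ IsStrongRainbowColoring (HG n) c := by
  have hij : i ≠ j := by
    rintro rfl
    simp [SimpleGraph.dist_self] at hfar
  have hn : 2 ≤ n := by
    have h1 : 0 < n := i.pos
    by_contra h
    have : n = 1 := by omega
    subst this
    exact hij (Subsingleton.elim i j)
  -- adjacency of cycle vertices to v and w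
  have hadj : ∀ (a : Fin n) (b : Bool), (HG n).Adj (Sum.inl a) (Sum.inr b) := by
    intro a b
    rw [HG, SimpleGraph.fromRel_adj]
    exact ⟨by simp, Or.inl trivial⟩
  have hcycdist : ∀ {a b : Fin n}, (SimpleGraph.cycleGraph n).Adj a b →
      (SimpleGraph.cycleGraph n).dist a b ≤ 1 := fun h =>
    SimpleGraph.dist_le (SimpleGraph.Walk.cons h SimpleGraph.Walk.nil)
  -- distance in HG is 2
  let p0 : (HG n).Walk (Sum.inl i) (Sum.inl j) :=
    SimpleGraph.Walk.cons (hadj i true) (SimpleGraph.Walk.cons (hadj j true).symm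
      SimpleGraph.Walk.nil)
  have hd2 : (HG n).dist (Sum.inl i) (Sum.inl j) = 2 := by
    have hle : (HG n).dist (Sum.inl i) (Sum.inl j) ≤ 2 := SimpleGraph.dist_le p0
    have hne0 : (HG n).dist (Sum.inl i) (Sum.inl j) ≠ 0 := by
      intro h0
      have := (p0.reachable.dist_eq_zero_iff).mp h0
      simp at this
      exact hij this
    have hne1 : (HG n).dist (Sum.inl i) (Sum.inl j) ≠ 1 := by
      intro h1
      have := hg_adj_inl hn (SimpleGraph.dist_eq_one_iff_adj.mp h1)
      have := hcycdist this
      omega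
    omega
  have main : ¬ ∃ p : (HG n).Walk (Sum.inl i) (Sum.inl j), p.IsPath ∧
      p.length = (HG n).dist (Sum.inl i) (Sum.inl j) ∧ IsRainbow c p := by
    rintro ⟨p, _, hlen, hrb⟩
    rw [hd2] at hlen
    cases p with
    | nil => simp at hlen
    | cons h1 q =>
      rename_i x hp
      cases q with
      | nil => simp at hlen
      | cons h2 q2 =>
        cases q2 with
        | cons h3 q3 => simp [SimpleGraph.Walk.length_cons] at hlen
        | nil =>
      cases x with
      | inl k =>
        have hle2 : (SimpleGraph.cycleGraph n).dist i j ≤ 2 :=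
          SimpleGraph.dist_le (SimpleGraph.Walk.cons (hg_adj_inl hn h1)
            (SimpleGraph.Walk.cons (hg_adj_inl hn h2) SimpleGraph.Walk.nil))
        omega
      | inr b =>
        simp only [IsRainbow, SimpleGraph.Walk.edges_cons, SimpleGraph.Walk.edges_nil,
          List.map_cons, List.map_nil, List.nodup_cons, List.mem_cons, List.mem_singleton,
          List.not_mem_nil, or_false, List.nodup_nil, and_true, not_or] at hrb
        apply hrb.1
        cases b
        · rw [hw, Sym2.eq_swap]
        · rw [hv, Sym2.eq_swap]
  exact ⟨main, fun hs => main (hs _ _)⟩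
end RC
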